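/- Every guarded recursion-free TSP⨟ process expression (over 0, 1, a.p, +, ⨟, NA) is provably equal, using the axioms A1–A3, A5–A10, NA1–NA4, A11–A13, to a head normal form (1 +) Σᵢ aᵢ.pᵢ, i.e., a sum of action-prefixed terms with an optional summand 1. -/
import Mathlib


/-- Recursion-free TSP⨟ process expressions with the auxiliary non-acceptance
operator NA: 0, 1, action prefix, choice, sequencing, NA. -/
inductive ExprN (A : Type) where
  | zero | one
  | act (a : A) (p : ExprN A)
  | add (p q : ExprN A)
  | seq (p q : ExprN A)
  | na (p : ExprN A)

/-- Derivability in equational logic from the axioms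
A1–A3, A5–A10, NA1–NA4, A11–A13. -/
inductive Deriv {A : Type} : ExprN A → ExprN A → Prop
  | refl (p) : Deriv p p
  | symm {p q} : Deriv p q → Deriv q p
  | trans {p q r} : Deriv p q → Deriv q r → Deriv p r
  | act_congr (a) {p q} : Deriv p q → Deriv (.act a p) (.act a q)
  | add_congr {p p' q q'} : Deriv p p' → Deriv q q' → Deriv (ExprN.add p q) (ExprN.add p' q')
  | seq_congr {p p' q q'} : Deriv p p' → Deriv q q' → Deriv (ExprN.seq p q) (ExprN.seq p' q')
  | na_congr {p q} : Deriv p q → Deriv (ExprN.na p) (ExprN.na q)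
  | A1 (p q) : Deriv (ExprN.add p q) (ExprN.add q p)
  | A2 (p q r) : Deriv (ExprN.add p (ExprN.add q r)) (ExprN.add (ExprN.add p q) r)
  | A3 (p) : Deriv (ExprN.add p p) p
  | A5 (p q r) : Deriv (ExprN.seq (ExprN.seq p q) r) (ExprN.seq p (ExprN.seq q r))
  | A6 (p) : Deriv (ExprN.add p .zero) p
  | A7 (p) : Deriv (ExprN.seq .zero p) .zero
  | A8 (p) : Deriv (ExprN.seq p .one) p
  | A9 (p) : Deriv (ExprN.seq .one p) p
  | A10 (a p q) : Deriv (ExprN.seq (ExprN.act a p) q) (ExprN.act a (ExprN.seq p q))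
  | NA1 : Deriv (ExprN.na .zero) .zero
  | NA2 : Deriv (ExprN.na .one) .zero
  | NA3 (a p) : Deriv (ExprN.na (ExprN.act a p)) (ExprN.act a p)
  | NA4 (p q) : Deriv (ExprN.na (ExprN.add p q)) (ExprN.add (ExprN.na p) (ExprN.na q))
  | A11 (p q r) : Deriv (ExprN.seq (ExprN.na (ExprN.add p q)) r)
      (ExprN.add (ExprN.seq (ExprN.na p) r) (ExprN.seq (ExprN.na q) r))
  | A12 (a p q r) : Deriv
      (ExprN.seq (ExprN.add (ExprN.add (ExprN.act a p) q) .one) (ExprN.na r))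
      (ExprN.seq (ExprN.add (ExprN.act a p) q) (ExprN.na r))
  | A13 (a p q r) : Deriv
      (ExprN.seq (ExprN.add (ExprN.add (ExprN.act a p) q) .one) (ExprN.add r .one))
      (ExprN.add (ExprN.seq (ExprN.add (ExprN.act a p) q) (ExprN.add r .one)) .one)

/-- The sum `Σᵢ aᵢ.pᵢ` of a list of action-prefixed terms (empty sum is 0). -/
def sumAct {A : Type} (l : List (A × ExprN A)) : ExprN A :=
  l.foldr (fun x acc => ExprN.add (ExprN.act x.1 x.2) acc) .zero

/-- A head normal form `(1 +) Σᵢ aᵢ.pᵢ` with optional summand 1. -/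
def hnf {A : Type} (l : List (A × ExprN A)) (b : Bool) : ExprN A :=
  if b then ExprN.add (sumAct l) .one else sumAct l

lemma hnf_false {A : Type} (l : List (A × ExprN A)) : hnf l false = sumAct l := rfl

lemma hnf_true {A : Type} (l : List (A × ExprN A)) :
    hnf l true = ExprN.add (sumAct l) .one := rfl

lemma add_zero_left {A : Type} (p : ExprN A) : Deriv (ExprN.add .zero p) p :=
  .trans (.A1 _ _) (.A6 _)

lemma sumAct_append {A : Type} (l l' : List (A × ExprN A)) :
    Deriv (ExprN.add (sumAct l) (sumAct l')) (sumAct (l ++ l')) := by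
  induction l with
  | nil => exact add_zero_left _
  | cons x t ih => exact .trans (.symm (.A2 _ _ _)) (.add_congr (.refl _) ih)

lemma hnf_add {A : Type} (l l' : List (A × ExprN A)) (b b' : Bool) :
    Deriv (ExprN.add (hnf l b) (hnf l' b')) (hnf (l ++ l') (b || b')) := by
  cases b <;> cases b' <;>
    simp only [hnf_false, hnf_true, Bool.false_or, Bool.or_true, Bool.true_or, Bool.or_false]
  · exact sumAct_append l l'
  · exact .trans (.A2 _ _ _) (.add_congr (sumAct_append l l') (.refl _))
  · -- (S+1) + S' ~ (S+S') + 1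
    exact .trans (.symm (.A2 _ _ _))
      (.trans (.add_congr (.refl _) (.A1 _ _))
        (.trans (.A2 _ _ _) (.add_congr (sumAct_append l l') (.refl _))))
  · -- (S+1) + (S'+1) ~ (S+S') + 1
    refine .trans (.symm (.A2 _ _ _)) ?_
    refine .trans (.add_congr (.refl _)
      (.trans (.A2 _ _ _)
        (.trans (.add_congr (.A1 _ _) (.refl _))
          (.trans (.symm (.A2 _ _ _)) (.add_congr (.refl _) (.A3 _)))))) ?_
    exact .trans (.A2 _ _ _) (.add_congr (sumAct_append l l') (.refl _))

lemma na_sumAct {A : Type} (l : List (A × ExprN A)) :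
    Deriv (ExprN.na (sumAct l)) (sumAct l) := by
  induction l with
  | nil => exact .NA1
  | cons x t ih => exact .trans (.NA4 _ _) (.add_congr (.NA3 _ _) ih)

lemma na_hnf {A : Type} (l : List (A × ExprN A)) (b : Bool) :
    Deriv (ExprN.na (hnf l b)) (hnf l false) := by
  cases b
  · exact na_sumAct l
  · exact .trans (.NA4 _ _) (.trans (.add_congr (na_sumAct l) .NA2) (.A6 _))

lemma seq_na_sumAct {A : Type} (l : List (A × ExprN A)) (q : ExprN A) :
    Deriv (ExprN.seq (ExprN.na (sumAct l)) q)
      (sumAct (l.map fun x => (x.1, ExprN.seq x.2 q))) := by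
  induction l with
  | nil => exact .trans (.seq_congr .NA1 (.refl _)) (.A7 _)
  | cons x t ih =>
    exact .trans (.A11 _ _ _)
      (.add_congr (.trans (.seq_congr (.NA3 _ _) (.refl _)) (.A10 _ _ _)) ih)

lemma seq_sumAct {A : Type} (l : List (A × ExprN A)) (q : ExprN A) :
    Deriv (ExprN.seq (sumAct l) q)
      (sumAct (l.map fun x => (x.1, ExprN.seq x.2 q))) :=
  .trans (.seq_congr (.symm (na_sumAct l)) (.refl _)) (seq_na_sumAct l q)

lemma seq_hnf {A : Type} (l : List (A × ExprN A)) (b : Bool)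
    (l' : List (A × ExprN A)) (b' : Bool) :
    ∃ (l'' : List (A × ExprN A)) (b'' : Bool),
      Deriv (ExprN.seq (hnf l b) (hnf l' b')) (hnf l'' b'') := by
  cases b
  · refine ⟨l.map fun x => (x.1, ExprN.seq x.2 (hnf l' b')), false, ?_⟩
    show Deriv (ExprN.seq (sumAct l) (hnf l' b')) (sumAct _)
    exact seq_sumAct l (hnf l' b')
  · cases l with
    | nil =>
      exact ⟨l', b', .trans (.seq_congr (add_zero_left _) (.refl _)) (.A9 _)⟩
    | cons x t =>
      obtain ⟨a, p0⟩ := x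
      cases b'
      · refine ⟨((a, p0) :: t).map fun x => (x.1, ExprN.seq x.2 (sumAct l')), false, ?_⟩
        show Deriv _ (sumAct (((a, p0) :: t).map fun x => (x.1, ExprN.seq x.2 (sumAct l'))))
        refine .trans (.seq_congr (.refl _) (.symm (na_sumAct l'))) ?_
        refine .trans (.A12 a p0 (sumAct t) (sumAct l')) ?_
        exact .trans (.seq_congr (.refl _) (na_sumAct l')) (seq_sumAct ((a, p0) :: t) _)
      · refine ⟨((a, p0) :: t).map fun x =>
            (x.1, ExprN.seq x.2 (ExprN.add (sumAct l') .one)), true, ?_⟩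
        exact .trans (.A13 a p0 (sumAct t) (sumAct l'))
          (.add_congr (seq_sumAct ((a, p0) :: t) _) (.refl _))

/-- every (guarded) recursion-free TSP⨟ expression is provably
equal, from the axioms, to a head normal form `(1 +) Σᵢ aᵢ.pᵢ`. -/
theorem hnf_elimination {A : Type} (p : ExprN A) :
    ∃ (l : List (A × ExprN A)) (b : Bool), Deriv p (hnf l b) := by
  induction p with
  | zero => exact ⟨[], false, .refl _⟩
  | one => exact ⟨[], true, .symm (add_zero_left _)⟩
  | act a p _ => exact ⟨[(a, p)], false, .symm (.A6 _)⟩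
  | add p q ihp ihq =>
    obtain ⟨l, b, hp⟩ := ihp
    obtain ⟨l', b', hq⟩ := ihq
    exact ⟨l ++ l', b || b', .trans (.add_congr hp hq) (hnf_add l l' b b')⟩
  | seq p q ihp ihq =>
    obtain ⟨l, b, hp⟩ := ihp
    obtain ⟨l', b', hq⟩ := ihq
    obtain ⟨l'', b'', h⟩ := seq_hnf l b l' b'
    exact ⟨l'', b'', .trans (.seq_congr hp hq) h⟩
  | na p ih =>
    obtain ⟨l, b, hp⟩ := ih
    exact ⟨l, false, .trans (.na_congr hp) (na_hnf l b)⟩
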